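/- arXiv:2603.19202 — 2 statements merged into one kernel-verified Lean document; each statement's English description precedes it below -/
import Mathlib

section
/- For any positive integers $a$ and $k$, the $k$-th pseudopower satisfies $a^{\langle k \rangle} \le a^{(k+1)/k}$, where $a^{\langle k \rangle} = \binom{n_k+1}{k+1} + \binom{n_{k-1}+1}{k} + \cdots + \binom{n_j+1}{j+1}$ is defined from the $k$-th Macaulay representation $a = \binom{n_k}{k} + \cdots + \binom{n_j}{j}$. -/
/-!
Compare `a` with the real binomial coefficient `x ↦ choose x k`. If `n_k ≤ x` and
`a ≤ choose x k`, then `(k + 1) a^⟨k⟩ ≤ a (x + 1)`, which reads `a^⟨k⟩ ≤ choose (x + 1) (k + 1)`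
when `a = choose x k`. This goes by induction on `k`, peeling off the top term `C(n_k, k)` and
writing `a'` for the rest. Since `a < C(n_k + 1, k)`, one may cap `x` at `n_k + 1`. Pascal's
rule and monotonicity of `choose · k` then give `a' ≤ choose (x - 1) (k - 1)`, which feeds the
induction hypothesis, while convexity of `choose · k` on `[n_k, n_k + 1]` gives
`a' ≤ (x - n_k) C(n_k, k - 1)`, which pays for the top term.

Taking `x = k a^{1/k}`, so that `a = (x / k)^k ≤ choose x k`, yields
`a^⟨k⟩ ≤ a (k a^{1/k} + 1) / (k + 1) ≤ a^{(k+1)/k}`.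
-/

open Finset Polynomial

namespace Ring

theorem choose_eq_descPochhammer_eval_div (x : ℝ) (k : ℕ) :
    choose x k = (descPochhammer ℝ k).eval x / k.factorial := by
  rw [choose_eq_smul, ← aeval_eq_smeval, ← eval_map_algebraMap, descPochhammer_map,
    smul_eq_mul, inv_mul_eq_div]

theorem monotoneOn_choose (k : ℕ) : MonotoneOn (choose · k) (Set.Ici ((k : ℝ) - 1)) := by
  simp_rw [choose_eq_descPochhammer_eval_div]
  exact fun x hx y hy hxy =>
    div_le_div_of_nonneg_right (monotoneOn_descPochhammer_eval k hx hy hxy) (by positivity)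

theorem convexOn_choose (k : ℕ) : ConvexOn ℝ (Set.Ici ((k : ℝ) - 1)) (choose · k) := by
  simp_rw [choose_eq_descPochhammer_eval_div, div_eq_inv_mul]
  exact (convexOn_descPochhammer_eval k).smul (by positivity)

theorem div_pow_le_choose {k : ℕ} {x : ℝ} (hx : k ≤ x) : (x / k) ^ k ≤ choose x k := by
  rcases k.eq_zero_or_pos with rfl | hk
  · simp
  have hk' : (0 : ℝ) < k := by exact_mod_cast hk
  have hfac : ∏ t ∈ range k, ((k : ℝ) - t) = k.factorial := by
    rw [← descPochhammer_eval_eq_prod_range, descPochhammer_eval_eq_descFactorial,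
      Nat.descFactorial_self]
  have hfactor : ∀ t ∈ range k, x / k * (k - t) ≤ x - t := fun t _ => by
    rw [mul_sub, div_mul_cancel₀ _ hk'.ne', sub_le_sub_iff_left, div_mul_eq_mul_div,
      le_div_iff₀ hk', mul_comm]
    exact mul_le_mul_of_nonneg_right hx (Nat.cast_nonneg t)
  rw [choose_eq_descPochhammer_eval_div, descPochhammer_eval_eq_prod_range,
    le_div_iff₀ (mod_cast k.factorial_pos), ← hfac, ← card_range k, ← prod_const,
    card_range, ← prod_mul_distrib]
  refine prod_le_prod (fun t ht => mul_nonneg (div_nonneg (hk'.le.trans hx) hk'.le) ?_) hfactor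
  linarith [show (t : ℝ) < k by exact_mod_cast mem_range.1 ht]

theorem pow_le_choose_mul {k : ℕ} (hk : 0 < k) {r : ℝ} (hr : 1 ≤ r) :
    r ^ k ≤ choose (k * r) k := by
  have hk' : (0 : ℝ) < k := by exact_mod_cast hk
  simpa [mul_div_cancel_left₀ r hk'.ne'] using
    div_pow_le_choose (le_mul_of_one_le_right hk'.le hr)

theorem le_mul_of_choose_le_pow {k : ℕ} (hk : 0 < k) {x r : ℝ} (hkx : k ≤ x) (hr : 0 ≤ r)
    (h : choose x k ≤ r ^ k) : x ≤ k * r := by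
  have hk' : (0 : ℝ) < k := by exact_mod_cast hk
  have hxr : x / k ≤ r :=
    (pow_le_pow_iff_left₀ (div_nonneg (hk'.le.trans hkx) hk'.le) hr hk.ne').1
      ((div_pow_le_choose hkx).trans h)
  rwa [div_le_iff₀ hk', mul_comm] at hxr

theorem choose_succ_sub_le_choose_sub_one {k N : ℕ} {x : ℝ} (hkx : (k : ℝ) + 1 ≤ x)
    (hxN : x ≤ N + 1) : choose x (k + 1) - N.choose (k + 1) ≤ choose (x - 1) k := by
  have hpascal := choose_succ_succ (x - 1) k
  have hmono := monotoneOn_choose (k + 1) (a := x - 1) (b := N)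
    (by simp only [Set.mem_Ici]; push_cast; linarith)
    (by simp only [Set.mem_Ici]; push_cast; linarith)
    (by linarith)
  rw [sub_add_cancel] at hpascal
  simp only [choose_natCast] at hmono
  linarith

theorem choose_succ_sub_le_mul_choose {k N : ℕ} (hkN : k + 1 ≤ N) {x : ℝ}
    (hx : x ∈ Set.Icc (N : ℝ) (N + 1)) :
    choose x (k + 1) - N.choose (k + 1) ≤ (x - N) * N.choose k := by
  have hNmem : (N : ℝ) ∈ Set.Ici (((k + 1 : ℕ) : ℝ) - 1) := by
    rw [Set.mem_Ici, Nat.cast_add_one, add_sub_cancel_right]; exact_mod_cast (by omega : k ≤ N)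
  have hchord := (convexOn_choose (k + 1)).2 hNmem
    (by simp only [Set.mem_Ici] at hNmem ⊢; linarith : (N : ℝ) + 1 ∈ _)
    (by linarith [hx.2] : 0 ≤ (N : ℝ) + 1 - x) (by linarith [hx.1] : 0 ≤ x - N) (by ring)
  have hx' : (N + 1 - x) • (N : ℝ) + (x - N) • ((N : ℝ) + 1) = x := by
    simp only [smul_eq_mul]; ring
  have hnat : choose ((N : ℝ) + 1) (k + 1) = N.choose k + N.choose (k + 1) := by
    rw [← Nat.cast_add_one, choose_natCast, Nat.choose_succ_succ', Nat.cast_add]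
  rw [hx'] at hchord
  simp only [smul_eq_mul, choose_natCast, hnat] at hchord
  linarith

end Ring

theorem Nat.cast_choose_succ_mul {R : Type*} [CommRing R] (m i : ℕ) :
    (m.choose (i + 1) : R) * (i + 1) = m.choose i * (m - i) := by
  rcases le_or_gt i m with him | hmi
  · have := congrArg (Nat.cast : ℕ → R) (Nat.choose_succ_right_eq m i)
    push_cast [Nat.cast_sub him] at this
    exact this
  · rw [Nat.choose_eq_zero_of_lt hmi, Nat.choose_eq_zero_of_lt (by omega)]
    simp

/-- The condition `n_k > ⋯ > n_j ≥ j` on the tops of a `k`-th Macaulay representation. -/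
structure IsMacaulaySeq (j k : ℕ) (n : ℕ → ℕ) : Prop where
  le_apply_start : j ≤ n j
  apply_lt_apply_succ : ∀ i, j ≤ i → i < k → n i < n (i + 1)

namespace IsMacaulaySeq

variable {j k : ℕ} {n : ℕ → ℕ}

theorem of_succ (h : IsMacaulaySeq j (k + 1) n) : IsMacaulaySeq j k n :=
  ⟨h.le_apply_start, fun i hji hik => h.apply_lt_apply_succ i hji (by omega)⟩

theorem self_le_apply (h : IsMacaulaySeq j k n) (hjk : j ≤ k) : k ≤ n k := by
  induction k, hjk using Nat.le_induction with
  | base => exact h.le_apply_start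
  | succ k hjk ih =>
    have := h.apply_lt_apply_succ k hjk k.lt_succ_self
    have := ih h.of_succ
    omega

theorem sum_choose_lt (h : IsMacaulaySeq j k n) (hj : 1 ≤ j) (hjk : j ≤ k) :
    ∑ i ∈ Icc j k, (n i).choose i < (n k + 1).choose k := by
  induction k, hjk using Nat.le_induction with
  | base =>
    obtain ⟨i, rfl⟩ : ∃ i, j = i + 1 := ⟨j - 1, by omega⟩
    rw [Icc_self, sum_singleton, Nat.choose_succ_succ' (n (i + 1))]
    have := Nat.choose_pos (show i ≤ n (i + 1) by have := h.le_apply_start; omega)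
    omega
  | succ k hjk ih =>
    rw [sum_Icc_succ_top (by omega), Nat.choose_succ_succ' (n (k + 1))]
    have hlt := ih h.of_succ
    have hmono : (n k + 1).choose k ≤ (n (k + 1)).choose k :=
      Nat.choose_le_choose k (h.apply_lt_apply_succ k hjk k.lt_succ_self)
    omega

theorem sum_choose_le_choose_min (h : IsMacaulaySeq j k n) (hj : 1 ≤ j) (hjk : j ≤ k) {x : ℝ}
    (hsum : ∑ i ∈ Icc j k, ((n i).choose i : ℝ) ≤ Ring.choose x k) :
    ∑ i ∈ Icc j k, ((n i).choose i : ℝ) ≤ Ring.choose (min x (n k + 1)) k := by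
  rcases min_choice x ((n k : ℝ) + 1) with hy | hy <;> rw [hy]
  · exact hsum
  · rw [← Nat.cast_add_one, Ring.choose_natCast]
    exact_mod_cast (h.sum_choose_lt hj hjk).le

theorem mul_sum_choose_succ_le (h : IsMacaulaySeq j k n) (hj : 1 ≤ j) (hjk : j ≤ k) {x : ℝ}
    (hx : n k ≤ x) (hsum : ∑ i ∈ Icc j k, ((n i).choose i : ℝ) ≤ Ring.choose x k) :
    (k + 1) * ∑ i ∈ Icc j k, ((n i).choose (i + 1) : ℝ)
      ≤ (∑ i ∈ Icc j k, ((n i).choose i : ℝ)) * (x - k) := by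
  induction k, hjk using Nat.le_induction generalizing x with
  | base =>
    rw [Icc_self, sum_singleton, sum_singleton, mul_comm, Nat.cast_choose_succ_mul]
    exact mul_le_mul_of_nonneg_left (by linarith) (Nat.cast_nonneg _)
  | succ k hjk ih =>
    have hsum_y := h.sum_choose_le_choose_min hj (by omega) hsum
    set N := n (k + 1)
    set y := min x (N + 1)
    have hNy : (N : ℝ) ≤ y := le_min hx (by linarith)
    have hyN : y ≤ N + 1 := min_le_right _ _
    have hyx : y ≤ x := min_le_left _ _
    have hkN : (k : ℝ) + 1 ≤ N := by exact_mod_cast h.self_le_apply (by omega)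
    have hnkN : (n k : ℝ) + 1 ≤ N := by
      exact_mod_cast h.apply_lt_apply_succ k hjk k.lt_succ_self
    simp only [sum_Icc_succ_top (show j ≤ k + 1 by omega)] at hsum_y ⊢
    push_cast
    set A := ∑ i ∈ Icc j k, ((n i).choose i : ℝ)
    set T := ∑ i ∈ Icc j k, ((n i).choose (i + 1) : ℝ)
    have hA : 0 ≤ A := sum_nonneg fun i _ => Nat.cast_nonneg _
    have hA_pascal : A ≤ Ring.choose (y - 1) k := by
      linarith [Ring.choose_succ_sub_le_choose_sub_one (N := N) (k := k) (by linarith) hyN]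
    have hA_chord : A ≤ (y - N) * N.choose k := by
      linarith [Ring.choose_succ_sub_le_mul_choose (N := N) (k := k) (by exact_mod_cast hkN)
        ⟨hNy, hyN⟩]
    have hT := ih h.of_succ (x := y - 1) (by linarith) hA_pascal
    have htop := Nat.cast_choose_succ_mul (R := ℝ) N (k + 1)
    have hratio := Nat.cast_choose_succ_mul (R := ℝ) N k
    push_cast at htop
    have hkey : A * (y - (k + 1)) ≤ (k + 1) * N.choose (k + 1) * (y - N) :=
      calc A * (y - (k + 1)) ≤ (y - N) * N.choose k * (y - (k + 1)) :=
            mul_le_mul_of_nonneg_right hA_chord (by linarith)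
        _ ≤ (y - N) * N.choose k * (N - k) :=
            mul_le_mul_of_nonneg_left (by linarith) (mul_nonneg (by linarith) (Nat.cast_nonneg _))
        _ = (k + 1) * N.choose (k + 1) * (y - N) := by rw [mul_assoc, ← hratio]; ring
    have hT' : (k + 2) * T ≤ A * (y - (k + 1)) + N.choose (k + 1) * (y - N) := by
      refine le_of_mul_le_mul_left ?_ (by positivity : (0 : ℝ) < k + 1)
      nlinarith
    calc (k + 1 + 1) * (T + N.choose (k + 1 + 1))
        ≤ (A + N.choose (k + 1)) * (y - (k + 1)) := by linarith
      _ ≤ (A + N.choose (k + 1)) * (x - (k + 1)) :=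
          mul_le_mul_of_nonneg_left (by linarith) (by positivity)

theorem mul_sum_choose_succ_succ_le (h : IsMacaulaySeq j k n) (hj : 1 ≤ j) (hjk : j ≤ k)
    {x : ℝ} (hx : n k ≤ x)
    (hsum : ∑ i ∈ Icc j k, ((n i).choose i : ℝ) ≤ Ring.choose x k) :
    (k + 1) * ∑ i ∈ Icc j k, ((n i + 1).choose (i + 1) : ℝ)
      ≤ (∑ i ∈ Icc j k, ((n i).choose i : ℝ)) * (x + 1) := by
  have hpascal : ∑ i ∈ Icc j k, ((n i + 1).choose (i + 1) : ℝ)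
      = ∑ i ∈ Icc j k, ((n i).choose i : ℝ)
        + ∑ i ∈ Icc j k, ((n i).choose (i + 1) : ℝ) := by
    simp only [Nat.choose_succ_succ', Nat.cast_add, sum_add_distrib]
  rw [hpascal]
  linarith [h.mul_sum_choose_succ_le hj hjk hx hsum]

end IsMacaulaySeq

/-- For positive integers `a` and `k`, with `a = C(n_k,k) + ⋯ + C(n_j,j)` the `k`-th
Macaulay representation of `a`, the `k`-th pseudopower
`a^⟨k⟩ = C(n_k+1, k+1) + ⋯ + C(n_j+1, j+1)` satisfies `a^⟨k⟩ ≤ a^((k+1)/k)`. -/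
theorem stmt_4 (a k j : ℕ) (n : ℕ → ℕ) (ha : 0 < a) (hk : 0 < k)
    (hj : 1 ≤ j) (hjk : j ≤ k) (hnj : j ≤ n j)
    (hmono : ∀ i, j ≤ i → i < k → n i < n (i + 1))
    (hrep : a = ∑ i ∈ Finset.Icc j k, (n i).choose i) :
    ((∑ i ∈ Finset.Icc j k, (n i + 1).choose (i + 1) : ℕ) : ℝ)
      ≤ (a : ℝ) ^ (((k : ℝ) + 1) / (k : ℝ)) := by
  have hmac : IsMacaulaySeq j k n := ⟨hnj, hmono⟩
  have hk' : (0 : ℝ) < k := by exact_mod_cast hk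
  have hsum : ∑ i ∈ Icc j k, ((n i).choose i : ℝ) = a := by rw [hrep]; push_cast; rfl
  set r : ℝ := (a : ℝ) ^ (k : ℝ)⁻¹
  have hrk : r ^ k = a := Real.rpow_inv_natCast_pow (Nat.cast_nonneg a) hk.ne'
  have hr : 1 ≤ r := Real.one_le_rpow (by exact_mod_cast ha) (inv_nonneg.2 hk'.le)
  have hnk : (n k : ℝ) ≤ k * r := by
    refine Ring.le_mul_of_choose_le_pow hk (by exact_mod_cast hmac.self_le_apply hjk)
      (by linarith) ?_
    rw [Ring.choose_natCast, hrk, ← hsum]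
    exact single_le_sum (f := fun i => ((n i).choose i : ℝ)) (fun i _ => Nat.cast_nonneg _)
      (mem_Icc.2 ⟨hjk, le_rfl⟩)
  have hpseudo := hmac.mul_sum_choose_succ_succ_le hj hjk hnk
    (hsum ▸ hrk ▸ Ring.pow_le_choose_mul hk hr)
  rw [hsum] at hpseudo
  have hpow : (a : ℝ) ^ (((k : ℝ) + 1) / k) = a * r := by
    rw [add_div, div_self hk'.ne', Real.rpow_add (by exact_mod_cast ha), Real.rpow_one, one_div]
  push_cast
  rw [hpow]
  refine le_of_mul_le_mul_left ?_ (by positivity : (0 : ℝ) < k + 1)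
  nlinarith
end

section
/- For a positive integer $a$, a positive integer $k$, and a positive rational $\beta$ such that $\beta a$ is always an integer along the sequence considered, one has $(\beta a)^{\langle k \rangle} \sim \beta^{(k+1)/k} a^{\langle k \rangle}$ as $a \to \infty$, i.e. $\lim_{a \to \infty} (\beta a)^{\langle k \rangle} / (\beta^{(k+1)/k} a^{\langle k \rangle}) = 1$. -/
/-!
Let `n` be the top index of the Macaulay representation of `a` with respect to `k`, so that
`C(n, k) ≤ a < C(n+1, k)`. The greedy construction gives `C(n+1, k+1) ≤ a^⟨k⟩ < C(n+2, k+1)`,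
so `a^⟨k⟩ / a^((k+1)/k)` is squeezed between two ratios of binomial coefficients in `n`. Since
`C(n+j, k) ~ n^k / k!`, both ratios tend to `C_k = (k!)^((k+1)/k) / (k+1)!`, whence
`a^⟨k⟩ ~ C_k a^((k+1)/k)`. Applying this at `βa` and at `a` and dividing gives the theorem.
-/

/-- The `k`-th pseudopower `a^⟨k⟩`, computed greedily from the `k`-th Macaulay
representation of `a`. -/
def pseudoPow : ℕ → ℕ → ℕ
  | 0, _ => 0
  | (k+1), a =>
    if a = 0 then 0 else
      let n := Nat.findGreatest (fun q => Nat.choose q (k+1) ≤ a) (a + k + 1)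
      (n + 1).choose (k + 2) + pseudoPow k (a - n.choose (k+1))

open Filter Asymptotics Topology

lemma Nat.lt_choose_add_succ (a k : ℕ) : a < (a + k + 1).choose (k + 1) := by
  induction a with
  | zero => simp
  | succ a ih =>
    rw [show a + 1 + k + 1 = a + k + 1 + 1 by ring, Nat.choose_succ_succ']
    have := Nat.choose_pos (show k ≤ a + k + 1 by omega)
    omega

lemma Rat.cast_num_toNat_of_den_eq_one {K : Type*} [DivisionRing K] {q : ℚ} (hq : 0 ≤ q)
    (hden : q.den = 1) : ((q.num.toNat : ℕ) : K) = q := by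
  rw [← Int.cast_natCast, Int.toNat_of_nonneg (Rat.num_nonneg.2 hq), ← Rat.cast_intCast,
    Rat.coe_int_num_of_den_eq_one hden]

def macaulayTop (k a : ℕ) : ℕ := Nat.findGreatest (fun q => q.choose (k + 1) ≤ a) (a + k + 1)

lemma pseudoPow_succ_of_ne_zero {k a : ℕ} (ha : a ≠ 0) :
    pseudoPow (k + 1) a = (macaulayTop k a + 1).choose (k + 2) +
      pseudoPow k (a - (macaulayTop k a).choose (k + 1)) := by
  simp [pseudoPow, ha, macaulayTop]

section macaulayTop

variable {k a : ℕ}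

lemma succ_le_macaulayTop (ha : 0 < a) : k + 1 ≤ macaulayTop k a :=
  Nat.le_findGreatest (P := fun q => q.choose (k + 1) ≤ a) (by omega)
    (by rw [Nat.choose_self]; exact ha)

lemma choose_macaulayTop_le (ha : 0 < a) : (macaulayTop k a).choose (k + 1) ≤ a :=
  Nat.findGreatest_spec (P := fun q => q.choose (k + 1) ≤ a) (m := k + 1) (by omega)
    (by rw [Nat.choose_self]; exact ha)

lemma lt_choose_macaulayTop_succ : a < (macaulayTop k a + 1).choose (k + 1) := by
  have hle : macaulayTop k a ≤ a + k + 1 := Nat.findGreatest_le _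
  rcases hle.lt_or_eq with hlt | heq
  · exact not_le.1 (Nat.findGreatest_is_greatest (P := fun q => q.choose (k + 1) ≤ a)
      (Nat.lt_succ_self _) hlt)
  · rw [heq]
    exact (Nat.lt_choose_add_succ a k).trans_le (Nat.choose_le_succ _ _)

lemma tendsto_macaulayTop_atTop (k : ℕ) : Tendsto (macaulayTop k) atTop atTop := by
  refine tendsto_atTop.2 fun N => ?_
  filter_upwards [eventually_ge_atTop ((N + 1) ^ (k + 1))] with a ha
  by_contra! h
  have := lt_choose_macaulayTop_succ (k := k) (a := a)
  have := (Nat.choose_le_pow (macaulayTop k a + 1) (k + 1)).trans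
    (Nat.pow_le_pow_left (show macaulayTop k a + 1 ≤ N + 1 by omega) (k + 1))
  omega

end macaulayTop

lemma pseudoPow_lt_choose_succ : ∀ {j b m : ℕ}, b < m.choose j →
    pseudoPow j b < (m + 1).choose (j + 1)
  | 0, _, m, _ => by simp [pseudoPow]
  | j + 1, b, m, hb => by
    rcases Nat.eq_zero_or_pos b with rfl | hb0
    · have : j + 1 ≤ m := by by_contra! h; simp [Nat.choose_eq_zero_of_lt h] at hb
      simpa [pseudoPow] using Nat.choose_pos (show j + 2 ≤ m + 1 by omega)
    have hn_le := choose_macaulayTop_le (k := j) hb0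
    have hn_lt := lt_choose_macaulayTop_succ (k := j) (a := b)
    have hnm : macaulayTop j b < m := (Nat.choose_mono (j + 1)).reflect_lt (hn_le.trans_lt hb)
    rw [pseudoPow_succ_of_ne_zero hb0.ne']
    generalize macaulayTop j b = n at *
    rw [Nat.choose_succ_succ'] at hn_lt
    have hrest := pseudoPow_lt_choose_succ (j := j) (m := n) (b := b - n.choose (j + 1))
      (by omega)
    have hstep : (n + 2).choose (j + 2) ≤ (m + 1).choose (j + 2) :=
      Nat.choose_le_choose _ (by omega)
    -- Pascal's rule: `C(n+1, j+2) + C(n+1, j+1) = C(n+2, j+2)`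
    rw [Nat.choose_succ_succ' (n + 1) (j + 1)] at hstep
    rw [show j + 1 + 1 = j + 2 from rfl] at hstep ⊢
    omega

lemma choose_macaulayTop_succ_le_pseudoPow {k a : ℕ} (ha : a ≠ 0) :
    (macaulayTop k a + 1).choose (k + 2) ≤ pseudoPow (k + 1) a := by
  rw [pseudoPow_succ_of_ne_zero ha]
  exact Nat.le_add_right _ _

section bounds

variable {k a : ℕ} {r : ℝ}

lemma choose_div_rpow_le_pseudoPow_div_rpow (ha : 0 < a) (hr : 0 ≤ r) :
    ((macaulayTop k a + 1).choose (k + 2) : ℝ) / ((macaulayTop k a + 1).choose (k + 1) : ℝ) ^ r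
      ≤ (pseudoPow (k + 1) a : ℝ) / (a : ℝ) ^ r := by
  have hnum := choose_macaulayTop_succ_le_pseudoPow (k := k) ha.ne'
  have hden := (lt_choose_macaulayTop_succ (k := k) (a := a)).le
  exact div_le_div₀ (by positivity) (by exact_mod_cast hnum) (by positivity)
    (Real.rpow_le_rpow (by positivity) (by exact_mod_cast hden) hr)

lemma pseudoPow_div_rpow_le_choose_div_rpow (ha : 0 < a) (hr : 0 ≤ r) :
    (pseudoPow (k + 1) a : ℝ) / (a : ℝ) ^ r
      ≤ ((macaulayTop k a + 2).choose (k + 2) : ℝ) /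
        ((macaulayTop k a).choose (k + 1) : ℝ) ^ r := by
  have hpos : 0 < (macaulayTop k a).choose (k + 1) := Nat.choose_pos (succ_le_macaulayTop ha)
  refine div_le_div₀ (by positivity)
    (by exact_mod_cast (pseudoPow_lt_choose_succ lt_choose_macaulayTop_succ).le)
    (by positivity) (Real.rpow_le_rpow (by positivity) ?_ hr)
  exact_mod_cast choose_macaulayTop_le ha

end bounds

lemma isEquivalent_choose_add (j K : ℕ) :
    (fun n : ℕ => ((n + j).choose K : ℝ)) ~[atTop] fun n => (n : ℝ) ^ K / K.factorial := by
  have hshift : (fun n : ℕ => ((n + j : ℕ) : ℝ)) ~[atTop] fun n => (n : ℝ) := by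
    push_cast
    refine IsEquivalent.refl.add_isLittleO (isLittleO_const_left.2 (Or.inr ?_))
    exact tendsto_norm_atTop_atTop.comp tendsto_natCast_atTop_atTop
  exact ((isEquivalent_choose K).comp_tendsto (tendsto_add_atTop_nat j)).trans
    ((hshift.pow K).div IsEquivalent.refl)

lemma tendsto_choose_div_choose_rpow (k j₁ j₂ : ℕ) (hk : 0 < k) :
    Tendsto (fun n : ℕ => ((n + j₁).choose (k + 1) : ℝ) /
        ((n + j₂).choose k : ℝ) ^ (((k : ℝ) + 1) / k)) atTop
      (𝓝 ((k.factorial : ℝ) ^ (((k : ℝ) + 1) / k) / (k + 1).factorial)) := by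
  set e : ℝ := ((k : ℝ) + 1) / k
  have hequiv := (isEquivalent_choose_add j₁ (k + 1)).div
    ((isEquivalent_choose_add j₂ k).rpow (fun n => by positivity) (r := e))
  refine hequiv.symm.tendsto_nhds (tendsto_const_nhds.congr' ?_)
  filter_upwards [eventually_gt_atTop 0] with n hn
  have hn : (0 : ℝ) < n := by exact_mod_cast hn
  have hpow : ((n : ℝ) ^ k) ^ e = (n : ℝ) ^ (k + 1) := by
    rw [← Real.rpow_natCast, ← Real.rpow_mul hn.le, ← Real.rpow_natCast]
    congr 1
    simp only [e]
    push_cast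
    field_simp
  simp only [Pi.div_apply, Pi.pow_apply]
  rw [Real.div_rpow (by positivity) (by positivity), hpow]
  field_simp

/-- The limit is the constant `C_k = (k!)^(1/k) / (k+1)`, written as `(k!)^((k+1)/k) / (k+1)!`. -/
theorem tendsto_pseudoPow_div_rpow (k : ℕ) (hk : 0 < k) :
    Tendsto (fun a : ℕ => (pseudoPow k a : ℝ) / (a : ℝ) ^ (((k : ℝ) + 1) / k)) atTop
      (𝓝 ((k.factorial : ℝ) ^ (((k : ℝ) + 1) / k) / (k + 1).factorial)) := by
  obtain ⟨k, rfl⟩ : ∃ j, k = j + 1 := ⟨k - 1, by omega⟩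
  have he : (0 : ℝ) ≤ ((↑(k + 1) : ℝ) + 1) / ↑(k + 1) := by positivity
  refine tendsto_of_tendsto_of_tendsto_of_le_of_le'
    ((tendsto_choose_div_choose_rpow (k + 1) 1 1 hk).comp (tendsto_macaulayTop_atTop k))
    ((tendsto_choose_div_choose_rpow (k + 1) 2 0 hk).comp (tendsto_macaulayTop_atTop k)) ?_ ?_
  · filter_upwards [eventually_gt_atTop 0] with a ha
    exact choose_div_rpow_le_pseudoPow_div_rpow ha he
  · filter_upwards [eventually_gt_atTop 0] with a ha
    exact pseudoPow_div_rpow_le_choose_div_rpow ha he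

/-- For a fixed positive integer `k` and a positive rational `β`, one has
`(βa)^⟨k⟩ ~ β^((k+1)/k) a^⟨k⟩` as `a → ∞` along the positive integers `a`
for which `βa` is an integer. -/
theorem stmt_18 (k : ℕ) (hk : 0 < k) (β : ℚ) (hβ : 0 < β) :
    Filter.Tendsto
      (fun a : ℕ => (pseudoPow k ((β * (a : ℚ)).num.toNat) : ℝ) /
        ((β : ℝ) ^ (((k : ℝ) + 1) / (k : ℝ)) * (pseudoPow k a : ℝ)))
      (Filter.atTop ⊓ Filter.principal {a : ℕ | (β * (a : ℚ)).den = 1})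
      (nhds 1) := by
  set e : ℝ := ((k : ℝ) + 1) / k
  set l := atTop ⊓ 𝓟 {a : ℕ | (β * (a : ℚ)).den = 1}
  set m : ℕ → ℕ := fun a => (β * (a : ℚ)).num.toNat
  have hβ' : (0 : ℝ) < β := by exact_mod_cast hβ
  have hm : ∀ᶠ a in l, (m a : ℝ) = β * a := by
    filter_upwards [mem_inf_of_right (mem_principal_self _)] with a ha
    rw [Rat.cast_num_toNat_of_den_eq_one (by positivity) ha, Rat.cast_mul, Rat.cast_natCast]
  have hm_atTop : Tendsto m l atTop := by
    refine tendsto_natCast_atTop_iff.1 (Tendsto.congr' (EventuallyEq.symm hm) ?_)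
    exact (tendsto_natCast_atTop_atTop.const_mul_atTop hβ').mono_left inf_le_left
  have hlim := tendsto_pseudoPow_div_rpow k hk
  have hC : (k.factorial : ℝ) ^ e / (k + 1).factorial ≠ 0 := by positivity
  have hratio := (hlim.comp hm_atTop).div (hlim.mono_left inf_le_left) hC
  rw [div_self hC] at hratio
  refine hratio.congr' ?_
  filter_upwards [hm, (eventually_gt_atTop 0).filter_mono inf_le_left] with a ha ha0
  have ha0 : (0 : ℝ) < a := by exact_mod_cast ha0
  show (pseudoPow k (m a) : ℝ) / (m a : ℝ) ^ e / ((pseudoPow k a : ℝ) / (a : ℝ) ^ e) =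
    (pseudoPow k (m a) : ℝ) / ((β : ℝ) ^ e * pseudoPow k a)
  rw [ha, Real.mul_rpow hβ'.le ha0.le, ← div_div, div_div_div_cancel_right₀ (by positivity),
    div_div]
end
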